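/- arXiv:1201.1835 — 6 statements merged into one kernel-verified Lean document; each statement's English description precedes it below -/
import Mathlib

section
/- For every real number R with 0 < R < 1, there exists a unique real number G in the open interval (0,1) satisfying G = 1 - exp(-G/R). (This unique solution is denoted Ḡ(R).) -/
/-!
The map `g x = 1 - exp (-x / R)` is strictly concave with `g 0 = 0`: if `0 < a < b` and `g b = b`,
then `g a` lies strictly above the chord from `(0, 0)` to `(b, b)`, so `g a > a`; hence `g` has at
most one positive fixed point. Since `exp y ≥ 1 + y`, we get
`g x ≥ x / (R + x) > x` for `0 < x < 1 - R`, while `g 1 < 1`; the intermediate value theorem gives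
a fixed point in `(0, 1)`.
-/

open Real Set Function

theorem StrictConcaveOn.eq_of_isFixedPt {f : ℝ → ℝ} (hf : StrictConcaveOn ℝ (Ici 0) f)
    (hf0 : 0 ≤ f 0) {a b : ℝ} (ha : 0 < a) (hb : 0 < b) (hfa : IsFixedPt f a)
    (hfb : IsFixedPt f b) : a = b := by
  wlog hab : a < b generalizing a b
  · rcases (not_lt.1 hab).eq_or_lt with h | h
    · exact h.symm
    · exact (this hb ha hfb hfa h).symm
  set t := a / b
  have ht : 0 < t := div_pos ha hb
  have ht1 : t < 1 := (div_lt_one hb).2 hab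
  have htb : t * b = a := div_mul_cancel₀ a hb.ne'
  -- `a` is the convex combination `(1 - t) • 0 + t • b`
  have hconc := hf.2 self_mem_Ici hb.le hb.ne (sub_pos.2 ht1) ht (sub_add_cancel 1 t)
  simp only [smul_eq_mul, mul_zero, zero_add, htb, hfa.eq, hfb.eq] at hconc
  nlinarith

theorem strictConcaveOn_one_sub_exp_neg_div {R : ℝ} (hR : 0 < R) :
    StrictConcaveOn ℝ univ fun x => 1 - exp (-x / R) := by
  refine ⟨convex_univ, fun x _ y _ hxy a b ha hb hab => ?_⟩
  have hne : -x / R ≠ -y / R := fun h => hxy <| by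
    rwa [div_left_inj' hR.ne', neg_inj] at h
  have hconv := strictConvexOn_exp.2 (mem_univ _) (mem_univ _) hne ha hb hab
  have hcomb : a • (-x / R) + b • (-y / R) = -(a • x + b • y) / R := by
    simp only [smul_eq_mul]; ring
  rw [hcomb] at hconv
  simp only [smul_eq_mul] at hconv ⊢
  linarith

theorem div_one_add_le_one_sub_exp_neg {y : ℝ} (hy : 0 ≤ y) : y / (1 + y) ≤ 1 - exp (-y) := by
  have hexp : exp (-y) ≤ 1 / (1 + y) := by
    rw [exp_neg, ← one_div]
    exact one_div_le_one_div_of_le (by linarith) (by linarith [add_one_le_exp y])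
  have hsplit : y / (1 + y) = 1 - 1 / (1 + y) := by field_simp; ring
  linarith

theorem lt_one_sub_exp_neg_div {R x : ℝ} (hR : 0 < R) (hx : 0 < x) (hxR : x < 1 - R) :
    x < 1 - exp (-x / R) := by
  have hbound := div_one_add_le_one_sub_exp_neg (div_pos hx hR).le
  have hrw : x / R / (1 + x / R) = x / (R + x) := by field_simp
  rw [hrw, ← neg_div] at hbound
  have hlt : x < x / (R + x) := by
    rw [lt_div_iff₀ (by linarith)]
    nlinarith
  linarith

theorem exists_mem_Ioo_eq_one_sub_exp_neg_div {R : ℝ} (hR0 : 0 < R) (hR1 : R < 1) :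
    ∃ G ∈ Ioo (0 : ℝ) 1, G = 1 - exp (-G / R) := by
  obtain ⟨x₀, hx₀, hx₀R⟩ : ∃ x₀ : ℝ, 0 < x₀ ∧ x₀ < 1 - R := ⟨(1 - R) / 2, by linarith, by linarith⟩
  have hgap : 0 < 1 - exp (-x₀ / R) - x₀ := sub_pos.2 (lt_one_sub_exp_neg_div hR0 hx₀ hx₀R)
  have hend : 1 - exp (-1 / R) - 1 < 0 := by linarith [exp_pos (-1 / R)]
  obtain ⟨G, hG, hG0⟩ := intermediate_value_Ioo' (by linarith : x₀ ≤ 1)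
    (Continuous.continuousOn (f := fun x => 1 - exp (-x / R) - x) (by fun_prop)) ⟨hend, hgap⟩
  exact ⟨G, ⟨hx₀.trans hG.1, hG.2⟩, by linarith [show 1 - exp (-G / R) - G = 0 from hG0]⟩

/-- For every real `R` with `0 < R < 1`, there exists a unique `G ∈ (0,1)`
satisfying `G = 1 - exp (-G/R)`. -/
theorem stmt_0 (R : ℝ) (hR0 : 0 < R) (hR1 : R < 1) :
    ∃! G : ℝ, G ∈ Set.Ioo (0 : ℝ) 1 ∧ G = 1 - Real.exp (-G / R) := by
  obtain ⟨G, hG, hGfix⟩ := exists_mem_Ioo_eq_one_sub_exp_neg_div hR0 hR1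
  refine ⟨G, ⟨hG, hGfix⟩, fun y ⟨hy, hyfix⟩ => ?_⟩
  have hconc := (strictConcaveOn_one_sub_exp_neg_div hR0).subset (subset_univ _) (convex_Ici 0)
  exact hconc.eq_of_isFixedPt (by simp) hy.1 hG.1 hyfix.symm hGfix.symm
end

section
/- Let g : [0,1] → [0,1] be continuous, strictly increasing with g(0) = 0, and let f : [0,1] → [0,1] be continuous and nondecreasing. If f(g(q)) < q for every q ∈ (0,1], then ∫₀¹ f(p) dp + ∫₀¹ g(q) dq < 1. -/
/-!
The subgraph `{(p, q) | q < f p}` of `f` and the transposed subgraph `{(p, q) | p < g q}` of `g`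
are disjoint, since a common point would give `q < f p ≤ f (g q) < q`. Both lie in the unit
square, and so does the open rectangle `(g q₀, g 1) × (f (g 1), q₀)` for any
`q₀ ∈ (f (g 1), 1)`, which meets neither of them. Hence the two areas add up to less than `1`.
-/

open Set MeasureTheory

theorem isOpen_regionBetween {α : Type*} [TopologicalSpace α] {u f : α → ℝ} {s : Set α}
    (hs : IsOpen s) (hu : ContinuousOn u s) (hf : ContinuousOn f s) :
    IsOpen (regionBetween u f s) := by
  have hφ : ContinuousOn (fun p : α × ℝ => (u p.1, p.2, f p.1)) (s ×ˢ univ) :=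
    (hu.comp continuousOn_fst fun p hp => hp.1).prodMk
      (continuousOn_snd.prodMk (hf.comp continuousOn_fst fun p hp => hp.1))
  have hopen : IsOpen {x : ℝ × ℝ × ℝ | x.1 < x.2.1 ∧ x.2.1 < x.2.2} :=
    (isOpen_lt continuous_fst (continuous_fst.comp continuous_snd)).inter
      (isOpen_lt (continuous_fst.comp continuous_snd) (continuous_snd.comp continuous_snd))
  convert hφ.isOpen_inter_preimage (hs.prod isOpen_univ) hopen using 1
  ext p
  simp [regionBetween]

theorem disjoint_regionBetween_preimage_swap {u v f g : ℝ → ℝ} {s t : Set ℝ}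
    (hf : MonotoneOn f s) (hg : MapsTo g t s) (hfg : ∀ y ∈ t, f (g y) ≤ y) :
    Disjoint (regionBetween u f s) (Prod.swap ⁻¹' regionBetween v g t) := by
  rw [disjoint_left]
  rintro ⟨x, y⟩ ⟨hx, -, hyf⟩ ⟨hy, -, hxg⟩
  exact lt_irrefl y (hyf.trans_le ((hf hx (hg hy) hxg.le).trans (hfg y hy)))

theorem disjoint_regionBetween_prod {α : Type*} {u f : α → ℝ} {s X : Set α} {Y : Set ℝ}
    (h : ∀ x ∈ s, x ∈ X → ∀ y ∈ Y, f x ≤ y) :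
    Disjoint (regionBetween u f s) (X ×ˢ Y) := by
  rw [disjoint_left]
  rintro ⟨x, y⟩ ⟨hx, -, hyf⟩ ⟨hxX, hyY⟩
  exact (h x hx hxX y hyY).not_gt hyf

theorem regionBetween_subset_prod_Icc {α : Type*} {u f : α → ℝ} {s : Set α} {a b : ℝ}
    (hu : ∀ x ∈ s, a ≤ u x) (hf : ∀ x ∈ s, f x ≤ b) :
    regionBetween u f s ⊆ s ×ˢ Icc a b :=
  fun _ ⟨hp, hup, hpf⟩ => ⟨hp, (hu _ hp).trans hup.le, hpf.le.trans (hf _ hp)⟩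

theorem volume_preimage_swap {α β : Type*} [MeasureSpace α] [MeasureSpace β]
    [SFinite (volume : Measure α)] [SFinite (volume : Measure β)] (E : Set (β × α)) :
    volume (Prod.swap ⁻¹' E : Set (α × β)) = volume E := by
  rw [Measure.volume_eq_prod]
  exact Measure.measurePreserving_swap.measure_preimage_emb
    MeasurableEquiv.prodComm.measurableEmbedding E

theorem volume_regionBetween_zero {α : Type*} [MeasureSpace α] [SigmaFinite (volume : Measure α)]
    {f : α → ℝ} {s : Set α} (hs : MeasurableSet s)
    (hf : IntegrableOn f s) (hf0 : ∀ x ∈ s, 0 ≤ f x) :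
    volume (regionBetween 0 f s) = ENNReal.ofReal (∫ x in s, f x) := by
  rw [Measure.volume_eq_prod,
    volume_regionBetween_eq_integral (f := 0) integrableOn_zero hf hs hf0]
  simp

theorem measure_lt_of_subset_of_disjoint {α : Type*} [MeasurableSpace α] {μ : Measure α}
    {U R S : Set α} (hR : MeasurableSet R) (hUR : Disjoint U R) (hU : U ⊆ S) (hRS : R ⊆ S)
    (hR0 : μ R ≠ 0) (hS : μ S ≠ ⊤) : μ U < μ S :=
  calc μ U < μ U + μ R := ENNReal.lt_add_right (ne_top_of_le_ne_top hS (measure_mono hU)) hR0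
    _ = μ (U ∪ R) := (measure_union hUR hR).symm
    _ ≤ μ S := measure_mono (union_subset hU hRS)

theorem volume_Icc_prod_Icc_zero_one : volume (Icc (0 : ℝ) 1 ×ˢ Icc (0 : ℝ) 1) = 1 := by
  rw [Measure.volume_eq_prod, Measure.prod_prod, Real.volume_Icc]
  norm_num

theorem volume_regionBetween_add_volume_preimage_swap_lt_one {f g : ℝ → ℝ}
    (hgmaps : MapsTo g (Icc 0 1) (Icc 0 1)) (hgcont : ContinuousOn g (Icc 0 1))
    (hgmono : StrictMonoOn g (Icc 0 1)) (hfmaps : MapsTo f (Icc 0 1) (Icc 0 1))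
    (hfmono : MonotoneOn f (Icc 0 1)) (htunnel : ∀ y ∈ Ioc (0 : ℝ) 1, f (g y) < y) :
    volume (regionBetween 0 f (Icc 0 1)) + volume (Prod.swap ⁻¹' regionBetween 0 g (Ioo 0 1))
      < 1 := by
  set A := regionBetween 0 f (Icc 0 1)
  set B := Prod.swap ⁻¹' regionBetween 0 g (Ioo 0 1)
  have h1 : (1 : ℝ) ∈ Icc (0 : ℝ) 1 := right_mem_Icc.2 zero_le_one
  obtain ⟨q, hcq, hq1⟩ := exists_between (htunnel 1 (right_mem_Ioc.2 one_pos))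
  have hc0 : 0 ≤ f (g 1) := (hfmaps (hgmaps h1)).1
  have hq : q ∈ Icc (0 : ℝ) 1 := ⟨hc0.trans hcq.le, hq1.le⟩
  set R := Ioo (g q) (g 1) ×ˢ Ioo (f (g 1)) q
  have hAB : Disjoint A B := disjoint_regionBetween_preimage_swap hfmono
    (hgmaps.mono_left Ioo_subset_Icc_self) fun y hy => (htunnel y (Ioo_subset_Ioc_self hy)).le
  have hAR : Disjoint A R := disjoint_regionBetween_prod fun x hx hxR y hy =>
    (hfmono hx (hgmaps h1) hxR.2.le).trans hy.1.le
  have hBR : Disjoint B R := ((disjoint_regionBetween_prod fun y hy hyR x hx =>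
    (hgmono.monotoneOn (Ioo_subset_Icc_self hy) hq hyR.2.le).trans hx.1.le).preimage
      Prod.swap).mono_right (preimage_swap_prod _ _).ge
  have hAS : A ⊆ Icc 0 1 ×ˢ Icc 0 1 :=
    regionBetween_subset_prod_Icc (fun _ _ => le_rfl) fun x hx => (hfmaps hx).2
  have hBS : B ⊆ Icc 0 1 ×ˢ Icc 0 1 :=
    (preimage_mono ((regionBetween_subset_prod_Icc (fun _ _ => le_rfl) fun y hy =>
      (hgmaps (Ioo_subset_Icc_self hy)).2).trans (prod_mono Ioo_subset_Icc_self le_rfl))).trans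
      (preimage_swap_prod _ _).le
  have hRS : R ⊆ Icc 0 1 ×ˢ Icc 0 1 :=
    prod_mono (Ioo_subset_Icc_self.trans (Icc_subset_Icc (hgmaps hq).1 (hgmaps h1).2))
      (Ioo_subset_Icc_self.trans (Icc_subset_Icc hc0 hq1.le))
  have hR0 : volume R ≠ 0 := (isOpen_Ioo.prod isOpen_Ioo).measure_ne_zero volume
    ((nonempty_Ioo.2 (hgmono hq h1 hq1)).prod (nonempty_Ioo.2 hcq))
  have hB : MeasurableSet B := (isOpen_regionBetween isOpen_Ioo continuousOn_const
    (hgcont.mono Ioo_subset_Icc_self)).measurableSet.preimage measurable_swap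
  rw [← measure_union hAB hB, ← volume_Icc_prod_Icc_zero_one]
  exact measure_lt_of_subset_of_disjoint (measurableSet_Ioo.prod measurableSet_Ioo)
    (disjoint_union_left.2 ⟨hAR, hBR⟩) (union_subset hAS hBS) hRS hR0
    (isCompact_Icc.prod isCompact_Icc).measure_ne_top

theorem stmt_5_general (g f : ℝ → ℝ)
    (hgmaps : Set.MapsTo g (Set.Icc 0 1) (Set.Icc 0 1))
    (hgcont : ContinuousOn g (Set.Icc 0 1)) (hgmono : StrictMonoOn g (Set.Icc 0 1))
    (hfmaps : Set.MapsTo f (Set.Icc 0 1) (Set.Icc 0 1))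
    (hfmono : MonotoneOn f (Set.Icc 0 1))
    (htunnel : ∀ x ∈ Set.Ioc (0 : ℝ) 1, f (g x) < x) :
    (∫ p in (0 : ℝ)..1, f p) + (∫ x in (0 : ℝ)..1, g x) < 1 := by
  have hf0 : ∀ x ∈ Icc (0 : ℝ) 1, 0 ≤ f x := fun x hx => (hfmaps hx).1
  have hg0 : ∀ x ∈ Ioo (0 : ℝ) 1, 0 ≤ g x := fun x hx => (hgmaps (Ioo_subset_Icc_self hx)).1
  have hlt := volume_regionBetween_add_volume_preimage_swap_lt_one hgmaps hgcont hgmono hfmaps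
    hfmono htunnel
  rw [volume_preimage_swap,
    volume_regionBetween_zero measurableSet_Icc (hfmono.integrableOn_isCompact isCompact_Icc) hf0,
    volume_regionBetween_zero measurableSet_Ioo
      ((hgmono.monotoneOn.integrableOn_isCompact isCompact_Icc).mono_set Ioo_subset_Icc_self) hg0,
    ← ENNReal.ofReal_add (setIntegral_nonneg measurableSet_Icc hf0)
      (setIntegral_nonneg measurableSet_Ioo hg0), ENNReal.ofReal_lt_one] at hlt
  rwa [intervalIntegral.integral_of_le zero_le_one, intervalIntegral.integral_of_le zero_le_one,
    ← integral_Icc_eq_integral_Ioc, integral_Ioc_eq_integral_Ioo]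

/-- EXIT chart area argument: if `g : [0,1] → [0,1]` is continuous, strictly
increasing with `g 0 = 0`, `f : [0,1] → [0,1]` is continuous and nondecreasing,
and `f (g q) < q` for every `q ∈ (0,1]`, then `∫₀¹ f + ∫₀¹ g < 1`. -/
theorem stmt_5 (g f : ℝ → ℝ)
    (hgmaps : Set.MapsTo g (Set.Icc 0 1) (Set.Icc 0 1))
    (hgcont : ContinuousOn g (Set.Icc 0 1)) (hgmono : StrictMonoOn g (Set.Icc 0 1))
    (hg0 : g 0 = 0)
    (hfmaps : Set.MapsTo f (Set.Icc 0 1) (Set.Icc 0 1))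
    (hfcont : ContinuousOn f (Set.Icc 0 1)) (hfmono : MonotoneOn f (Set.Icc 0 1))
    (htunnel : ∀ x ∈ Set.Ioc (0 : ℝ) 1, f (g x) < x) :
    (∫ p in (0 : ℝ)..1, f p) + (∫ x in (0 : ℝ)..1, g x) < 1 :=
  stmt_5_general g f hgmaps hgcont hgmono hfmaps hfmono htunnel
end

section
/- Let k ≥ 1 be an integer, set n = k + 1, and for 0 ≤ g ≤ n set ẽ_g = C(n,g) · min(g, k) (the un-normalized information functions of the (k+1,k) single parity-check code). Then for every p ∈ [0,1], (1/n) Σ_{t=0}^{n-1} p^t (1-p)^{n-1-t} [ (n-t) ẽ_{n-t} - (t+1) ẽ_{n-1-t} ] = 1 - (1-p)^{n-1}. -/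
/-!
Both weights in the `t`-th term collapse to the same binomial coefficient:
`(n - t) C(n, n - t) = n C(n - 1, t) = (t + 1) C(n, n - 1 - t)`. Hence the EXIT sum of any code
with `ẽ_g = C(n, g) r(g)` is the expectation of the rank increment `r(n - t) - r(n - 1 - t)`
under the binomial law `Bin(n - 1, p)`. For the single parity-check code this increment is
`1` except at `t = 0`, where it vanishes, leaving `1 - (1 - p)^(n - 1)`.
-/

open Finset

namespace Nat

theorem sub_mul_choose_sub (m t : ℕ) (ht : t ≤ m + 1) :
    (m + 1 - t) * (m + 1).choose (m + 1 - t) = (m + 1) * m.choose t := by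
  rw [choose_symm ht, mul_comm, ← choose_mul_succ_eq, mul_comm]

theorem succ_mul_choose_sub (m t : ℕ) (ht : t ≤ m) :
    (t + 1) * (m + 1).choose (m - t) = (m + 1) * m.choose t := by
  rw [choose_symm_of_eq_add (by omega : m + 1 = (m - t) + (t + 1)), add_one_mul_choose_eq,
    mul_comm]

end Nat

theorem exitSum_eq_binomial_expectation (m : ℕ) (r e : ℕ → ℝ)
    (he : ∀ g ≤ m + 1, e g = ((m + 1).choose g : ℝ) * r g) (p : ℝ) :
    ∑ t ∈ range (m + 1), p ^ t * (1 - p) ^ (m - t) *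
        (((m + 1 - t : ℕ) : ℝ) * e (m + 1 - t) - ((t + 1 : ℕ) : ℝ) * e (m - t))
      = (m + 1) * ∑ t ∈ range (m + 1),
          (m.choose t : ℝ) * p ^ t * (1 - p) ^ (m - t) * (r (m + 1 - t) - r (m - t)) := by
  rw [mul_sum]
  refine sum_congr rfl fun t htm => ?_
  have ht : t ≤ m := Nat.lt_succ_iff.mp (mem_range.mp htm)
  have hfirst : ((m + 1 - t : ℕ) : ℝ) * (m + 1).choose (m + 1 - t) = (m + 1) * m.choose t := by
    exact_mod_cast Nat.sub_mul_choose_sub m t (by omega)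
  have hsecond : ((t + 1 : ℕ) : ℝ) * (m + 1).choose (m - t) = (m + 1) * m.choose t := by
    exact_mod_cast Nat.succ_mul_choose_sub m t ht
  rw [he _ (by omega), he _ (by omega), ← mul_assoc, ← mul_assoc, hfirst, hsecond]
  ring

theorem sum_binomial_pmf_eq_one (m : ℕ) (p : ℝ) :
    ∑ t ∈ range (m + 1), (m.choose t : ℝ) * p ^ t * (1 - p) ^ (m - t) = 1 := by
  have h := add_pow p (1 - p) m
  rw [add_sub_cancel, one_pow] at h
  exact (sum_congr rfl fun t _ => by ring).trans h.symm

theorem sum_binomial_pmf_mul_ite_eq (m : ℕ) (p : ℝ) :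
    ∑ t ∈ range (m + 1), (m.choose t : ℝ) * p ^ t * (1 - p) ^ (m - t) * (if t = 0 then 0 else 1)
      = 1 - (1 - p) ^ m := by
  have hpmf := sum_binomial_pmf_eq_one m p
  rw [sum_range_succ'] at hpmf ⊢
  simp only [Nat.add_one_ne_zero, if_false, if_true, mul_one, mul_zero, add_zero]
  simp only [pow_zero, Nat.choose_zero_right, Nat.cast_one, one_mul, Nat.sub_zero] at hpmf
  linarith

theorem min_succ_sub_sub_min_sub (k t : ℕ) (ht : t ≤ k) :
    ((min (k + 1 - t) k : ℕ) : ℝ) - ((min (k - t) k : ℕ) : ℝ) = if t = 0 then 0 else 1 := by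
  split_ifs with h0
  · simp [h0]
  · rw [min_eq_left (by omega), min_eq_left (by omega), Nat.cast_sub (by omega),
      Nat.cast_sub ht]
    push_cast
    ring

theorem stmt_8_general (k : ℕ) (n : ℕ) (hn : n = k + 1) (e : ℕ → ℝ)
    (he : ∀ g ≤ n, e g = (Nat.choose n g : ℝ) * ((min g k : ℕ) : ℝ))
    (p : ℝ) :
    (1 / (n : ℝ)) * ∑ t ∈ Finset.range n,
        p ^ t * (1 - p) ^ (n - 1 - t) *
          (((n - t : ℕ) : ℝ) * e (n - t) - ((t + 1 : ℕ) : ℝ) * e (n - 1 - t))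
      = 1 - (1 - p) ^ (n - 1) := by
  subst hn
  simp only [Nat.add_sub_cancel]
  have hincrement : ∑ t ∈ range (k + 1), (k.choose t : ℝ) * p ^ t * (1 - p) ^ (k - t) *
      (((min (k + 1 - t) k : ℕ) : ℝ) - ((min (k - t) k : ℕ) : ℝ)) = 1 - (1 - p) ^ k := by
    rw [← sum_binomial_pmf_mul_ite_eq k p]
    exact sum_congr rfl fun t ht => by
      rw [min_succ_sub_sub_min_sub k t (Nat.lt_succ_iff.mp (mem_range.mp ht))]
  rw [exitSum_eq_binomial_expectation k _ e he, hincrement]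
  push_cast
  field_simp

/-- For `k ≥ 1` and `n = k + 1`, the average MAP EXIT function of the
`(k+1,k)` single parity-check code, whose un-normalized information functions
are `ẽ_g = C(n,g) · min(g,k)` for `0 ≤ g ≤ n`, equals `1 - (1-p)^(n-1)` for all
`p ∈ [0,1]`. -/
theorem stmt_8 (k : ℕ) (hk : 1 ≤ k) (n : ℕ) (hn : n = k + 1) (e : ℕ → ℝ)
    (he : ∀ g ≤ n, e g = (Nat.choose n g : ℝ) * ((min g k : ℕ) : ℝ))
    (p : ℝ) (hp : p ∈ Set.Icc (0 : ℝ) 1) :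
    (1 / (n : ℝ)) * ∑ t ∈ Finset.range n,
        p ^ t * (1 - p) ^ (n - 1 - t) *
          (((n - t : ℕ) : ℝ) * e (n - t) - ((t + 1 : ℕ) : ℝ) * e (n - 1 - t))
      = 1 - (1 - p) ^ (n - 1) :=
  stmt_8_general k n hn e he p
end

section
/- Let c ≥ 1 be an integer, let n_1, …, n_c be integers with n_h ≥ 2, and let Λ_1, …, Λ_c be nonnegative reals with Σ_h Λ_h = 1. Set n̄ = Σ_h Λ_h n_h, λ_h = Λ_h n_h / n̄, and R = 1/n̄. Let G > 0, define f_s(q) = 1 - exp(-(G/R) q) and F(q) = Σ_{h=1}^{c} λ_h f_s(q)^{n_h - 1} for q ∈ [0,1], and define the sequence q₀ = 1, q_{i+1} = F(q_i). If q_i → 0 as i → ∞, then G < Ḡ(R), where Ḡ(R) is the unique solution in (0,1) of the equation G = 1 - exp(-G/R). -/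
/-!
If `F` is monotone and `q_i → 0`, then `F x < x` on `(0, 1]`; otherwise the orbit of `1` could
never drop below `x`. Multiply this by `f_s'(x) = a e^{-a x} > 0`, where `a = G / R`, and
integrate over `[0, 1]` (the area argument). On the left, `Σ_h λ_h f_s^{n_h - 1} f_s'` integrates
to `Σ_h (Λ_h / n̄) (1 - e^{-a})^{n_h}`, which by Bernoulli is at least `R - e^{-a}`. On the right,
`x a e^{-a x}` integrates to `(1 - e^{-a}) / a - e^{-a}`. Together these give `G < 1 - e^{-G/R}`.
Since `x ↦ 1 - e^{-x/R} - x` is concave and vanishes at `0` and at `Ḡ`, it is positive only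
on `(0, Ḡ)`, so `G < Ḡ`.
-/

open Filter Set Real

theorem MonotoneOn.apply_lt_self_of_tendsto {α : Type*} [LinearOrder α] [TopologicalSpace α]
    [OrderClosedTopology α] {F : α → α} {q : ℕ → α} {a x : α} (hF : MonotoneOn F (Ici x))
    (hq : ∀ i, q (i + 1) = F (q i)) (hlim : Tendsto q atTop (nhds a)) (hx : a < x)
    (hxq : x ≤ q 0) : F x < x := by
  by_contra! hFx
  have hxle : ∀ i, x ≤ q i := by
    intro i
    induction i with
    | zero => exact hxq
    | succ i ih => exact hq i ▸ hFx.trans (hF self_mem_Ici ih ih)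
  exact hx.not_ge (ge_of_tendsto hlim (Eventually.of_forall hxle))

theorem monotoneOn_sum_mul_one_sub_exp_pow {ι : Type*} [Fintype ι] {a : ℝ} (ha : 0 ≤ a)
    {w : ι → ℝ} (hw : ∀ i, 0 ≤ w i) (m : ι → ℕ) :
    MonotoneOn (fun x => ∑ i, w i * (1 - exp (-a * x)) ^ m i) (Ici 0) := by
  intro x hx y _ hxy
  have hexp : exp (-a * y) ≤ exp (-a * x) := exp_le_exp.2 (by nlinarith)
  have hnonneg : 0 ≤ 1 - exp (-a * x) :=
    sub_nonneg.2 (exp_le_one_iff.2 (by nlinarith [mem_Ici.1 hx]))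
  dsimp only
  gcongr with i
  exact hw i

theorem hasDerivAt_exp_neg_mul (a x : ℝ) :
    HasDerivAt (fun x => exp (-a * x)) (-a * exp (-a * x)) x := by
  simpa [mul_comm] using ((hasDerivAt_id' x).const_mul (-a)).exp

theorem hasDerivAt_one_sub_exp_neg_mul (a x : ℝ) :
    HasDerivAt (fun x => 1 - exp (-a * x)) (a * exp (-a * x)) x := by
  simpa using (hasDerivAt_exp_neg_mul a x).const_sub 1

theorem hasDerivAt_one_sub_exp_div_sub_mul_exp {a : ℝ} (ha : a ≠ 0) (x : ℝ) :
    HasDerivAt (fun x => (1 - exp (-a * x)) / a - x * exp (-a * x))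
      (x * (a * exp (-a * x))) x := by
  refine (((hasDerivAt_one_sub_exp_neg_mul a x).div_const a).sub
    ((hasDerivAt_id' x).mul (hasDerivAt_exp_neg_mul a x))).congr_deriv ?_
  field_simp
  ring

theorem sum_mul_one_sub_exp_pow_lt {ι : Type*} [Fintype ι] {a : ℝ} (ha : 0 < a) (c : ι → ℝ)
    {m : ι → ℕ} (hm : ∀ i, m i ≠ 0)
    (hlt : ∀ x ∈ Ioo (0 : ℝ) 1, ∑ i, c i * m i * (1 - exp (-a * x)) ^ (m i - 1) < x) :
    ∑ i, c i * (1 - exp (-a)) ^ m i < (1 - exp (-a)) / a - exp (-a) := by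
  set Φ : ℝ → ℝ := fun x =>
    ∑ i, c i * (1 - exp (-a * x)) ^ m i - ((1 - exp (-a * x)) / a - x * exp (-a * x))
  have hΦ : ∀ x, HasDerivAt Φ
      ((∑ i, c i * m i * (1 - exp (-a * x)) ^ (m i - 1) - x) * (a * exp (-a * x))) x := by
    intro x
    refine ((HasDerivAt.fun_sum fun i _ =>
      ((hasDerivAt_one_sub_exp_neg_mul a x).pow (m i)).const_mul (c i)).sub
      (hasDerivAt_one_sub_exp_div_sub_mul_exp ha.ne' x)).congr_deriv ?_
    simp only [sub_mul, Finset.sum_mul, mul_assoc]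
  have hanti : StrictAntiOn Φ (Icc 0 1) := by
    refine strictAntiOn_of_deriv_neg (convex_Icc 0 1)
      (fun x _ => (hΦ x).continuousAt.continuousWithinAt) fun x hx => ?_
    rw [interior_Icc] at hx
    rw [(hΦ x).deriv]
    exact mul_neg_of_neg_of_pos (sub_neg.2 (hlt x hx)) (by positivity)
  have hΦ0 : Φ 0 = 0 := by simp [Φ, hm]
  have hΦ1 : Φ 1 < 0 :=
    hΦ0 ▸ hanti (left_mem_Icc.2 zero_le_one) (right_mem_Icc.2 zero_le_one) zero_lt_one
  simp only [Φ, mul_one, one_mul] at hΦ1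
  linarith

theorem sum_mul_one_sub_mul_le_sum_mul_one_sub_pow {ι : Type*} [Fintype ι] {w : ι → ℝ}
    (hw : ∀ i, 0 ≤ w i) (m : ι → ℕ) {t : ℝ} (ht : t ≤ 2) :
    ∑ i, w i * (1 - m i * t) ≤ ∑ i, w i * (1 - t) ^ m i := by
  gcongr with i
  · exact hw i
  simpa [sub_eq_add_neg] using one_add_mul_le_pow (a := -t) (by linarith) (m i)

theorem lt_of_lt_one_sub_exp {r x y : ℝ} (hy : 0 < y) (hyr : 1 - exp (-y / r) ≤ y)
    (hx : x < 1 - exp (-x / r)) : x < y := by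
  by_contra! hyx
  have hx0 : 0 < x := hy.trans_le hyx
  have ht0 : 0 < y / x := div_pos hy hx0
  have ht1 : 0 ≤ 1 - y / x := sub_nonneg.2 ((div_le_one hx0).2 hyx)
  have hconv := convexOn_exp.2 (mem_univ (-x / r)) (mem_univ 0) ht0.le ht1 (by ring)
  have hcomb : (y / x) • (-x / r) + (1 - y / x) • (0 : ℝ) = -y / r := by
    simp only [smul_eq_mul, mul_zero, add_zero]
    field_simp
  rw [hcomb, smul_eq_mul, smul_eq_mul, exp_zero, mul_one] at hconv
  have : y / x * exp (-x / r) < y / x * (1 - x) := mul_lt_mul_of_pos_left (by linarith) ht0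
  have hyx' : y / x * x = y := div_mul_cancel₀ y hx0.ne'
  nlinarith

theorem stmt_11_general (c : ℕ) (n : Fin c → ℕ) (hn : ∀ h, 2 ≤ n h)
    (Λ : Fin c → ℝ) (hΛ : ∀ h, 0 ≤ Λ h) (hsum : ∑ h, Λ h = 1)
    (nbar R : ℝ) (hnbar : nbar = ∑ h, Λ h * (n h : ℝ)) (hR : R = 1 / nbar)
    (G : ℝ) (hG : 0 < G)
    (F : ℝ → ℝ)
    (hF : ∀ x, F x = ∑ h, (Λ h * (n h : ℝ) / nbar) *
      (1 - Real.exp (-(G / R) * x)) ^ (n h - 1))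
    (q : ℕ → ℝ) (hq0 : q 0 = 1) (hq : ∀ i, q (i + 1) = F (q i))
    (hconv : Tendsto q atTop (nhds 0)) :
    ∀ Gbar ∈ Set.Ioo (0 : ℝ) 1, Gbar = 1 - Real.exp (-Gbar / R) → G < Gbar := by
  intro Gbar ⟨hGbar, _⟩ hGbarEq
  have hnbar_pos : 0 < nbar := by
    have : ∑ h, Λ h * 2 ≤ nbar := hnbar ▸ Finset.sum_le_sum fun h _ =>
      mul_le_mul_of_nonneg_left (by exact_mod_cast hn h) (hΛ h)
    rw [← Finset.sum_mul, hsum] at this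
    linarith
  have hR_pos : 0 < R := hR ▸ one_div_pos.2 hnbar_pos
  have ha : 0 < G / R := div_pos hG hR_pos
  have hFlt : ∀ x ∈ Ioo (0 : ℝ) 1, F x < x := by
    intro x hx
    have hmono := monotoneOn_sum_mul_one_sub_exp_pow ha.le (w := fun h => Λ h * n h / nbar)
      (fun h => div_nonneg (mul_nonneg (hΛ h) (Nat.cast_nonneg _)) hnbar_pos.le)
      (fun h => n h - 1)
    rw [← funext hF] at hmono
    exact (hmono.mono (Ici_subset_Ici.2 hx.1.le)).apply_lt_self_of_tendsto hq hconv hx.1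
      (hq0 ▸ hx.2.le)
  have harea := sum_mul_one_sub_exp_pow_lt ha (fun h => Λ h / nbar) (m := n)
    (fun h => by have := hn h; omega)
    (fun x hx => by simpa only [hF, div_mul_eq_mul_div] using hFlt x hx)
  have hbern := sum_mul_one_sub_mul_le_sum_mul_one_sub_pow
    (fun h => div_nonneg (hΛ h) hnbar_pos.le) n (t := exp (-(G / R)))
    (by linarith [exp_le_one_iff.2 (neg_nonpos.2 ha.le)])
  have hmean : ∑ h, Λ h / nbar * (1 - n h * exp (-(G / R))) = R - exp (-(G / R)) := by
    simp only [mul_sub, mul_one, Finset.sum_sub_distrib, ← Finset.sum_div, hsum,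
      div_mul_eq_mul_div, ← mul_assoc, ← Finset.sum_mul, ← hnbar, hR]
    field_simp
  have hcap : G < 1 - exp (-G / R) := by
    have hR_lt : R < (1 - exp (-(G / R))) / (G / R) := by linarith
    rw [div_div_eq_mul_div, lt_div_iff₀ hG, mul_comm] at hR_lt
    rw [neg_div]
    exact lt_of_mul_lt_mul_right hR_lt hR_pos.le
  exact lt_of_lt_one_sub_exp hGbar hGbarEq.ge hcap

/-- Capacity bound for repetition-based (`k = 1`) coded slotted ALOHA: if the
SIC recursion `q₀ = 1`, `q_{i+1} = Σ_h λ_h (1 - exp(-(G/R) q_i))^(n_h - 1)`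
converges to `0`, then `G < Ḡ(R)`, where `Ḡ(R)` is the unique solution in
`(0,1)` of `G = 1 - exp (-G/R)`. -/
theorem stmt_11 (c : ℕ) (hc : 1 ≤ c) (n : Fin c → ℕ) (hn : ∀ h, 2 ≤ n h)
    (Λ : Fin c → ℝ) (hΛ : ∀ h, 0 ≤ Λ h) (hsum : ∑ h, Λ h = 1)
    (nbar R : ℝ) (hnbar : nbar = ∑ h, Λ h * (n h : ℝ)) (hR : R = 1 / nbar)
    (G : ℝ) (hG : 0 < G)
    (F : ℝ → ℝ)
    (hF : ∀ x, F x = ∑ h, (Λ h * (n h : ℝ) / nbar) *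
      (1 - Real.exp (-(G / R) * x)) ^ (n h - 1))
    (q : ℕ → ℝ) (hq0 : q 0 = 1) (hq : ∀ i, q (i + 1) = F (q i))
    (hconv : Tendsto q atTop (nhds 0)) :
    ∀ Gbar ∈ Set.Ioo (0 : ℝ) 1, Gbar = 1 - Real.exp (-Gbar / R) → G < Gbar :=
  stmt_11_general c n hn Λ hΛ hsum nbar R hnbar hR G hG F hF q hq0 hq hconv
end

section
/- Let k ≥ 1 and c ≥ 1 be integers, let n_1, …, n_c be integers with n_h ≥ k + 1, and let Λ_1, …, Λ_c be nonnegative reals with Σ_h Λ_h = 1. Set n̄ = Σ_h Λ_h n_h, λ_h = Λ_h n_h / n̄, and R = k/n̄. Let G > 0, define f_s(q) = 1 - exp(-(G/R) q), f_b^{(h)}(p) = Σ_{l=0}^{k-1} C(n_h - 1, l) (1-p)^l p^{n_h - 1 - l}, and F(q) = Σ_{h=1}^{c} λ_h f_b^{(h)}(f_s(q)) for q ∈ [0,1], and define the sequence q₀ = 1, q_{i+1} = F(q_i). If q_i → 0 as i → ∞, then G < Ḡ(R), where Ḡ(R) is the unique solution in (0,1) of the equation G = 1 - exp(-G/R). 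-/
/-!
Area argument. Write `F = F̄ ∘ f_s` with `F̄ = Σ_h λ_h f_b^{(h)}`. Since `F` is monotone and the
recursion started at `q₀ = 1` converges to `0`, `F x < x` on `(0, 1]`, i.e. `F̄` lies strictly
below `f_s⁻¹` on `(0, f_s 1]`. Each `f_b^{(h)}` is a binomial lower tail whose integral over
`[0, 1]` is a sum of Beta integrals, equal to `k / n_h`, so `∫₀¹ F̄ = R`. The area below `f_s⁻¹`
capped at `1` is `f_s(1) R / G`, hence `R < (1 - exp (-G/R)) R / G`, i.e. `G < 1 - exp (-G/R)`.
Finally `x ↦ 1 - exp (-x/R) - x` is concave and vanishes at `0` and at `Ḡ`, so it is positive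
only on `(0, Ḡ)`, which gives `G < Ḡ`.
-/

open Filter Set Real

/-- `binomTail (n_h - 1) k` is the burst-node EXIT function `f_b^{(h)}`: the probability that
fewer than `k` of the other `n_h - 1` segments are received, each with probability `1 - p`. -/
noncomputable def binomTail (m j : ℕ) (p : ℝ) : ℝ :=
  ∑ l ∈ Finset.range j, (m.choose l : ℝ) * (1 - p) ^ l * p ^ (m - l)

namespace binomTail

theorem continuous (m j : ℕ) : Continuous (binomTail m j) := by
  unfold binomTail; fun_prop

theorem hasDerivAt (m j : ℕ) (p : ℝ) :
    HasDerivAt (binomTail m j) ((m.choose j : ℝ) * j * (1 - p) ^ (j - 1) * p ^ (m - j)) p := by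
  set g : ℕ → ℝ := fun l => (m.choose l : ℝ) * l * (1 - p) ^ (l - 1) * p ^ (m - l)
  have hterm (l : ℕ) : HasDerivAt (fun p : ℝ => (m.choose l : ℝ) * (1 - p) ^ l * p ^ (m - l))
      (g (l + 1) - g l) p := by
    have h1 : HasDerivAt (fun p : ℝ => (1 - p) ^ l) (l * (1 - p) ^ (l - 1) * (-1)) p :=
      (hasDerivAt_pow l (1 - p)).comp p ((hasDerivAt_id p).const_sub 1)
    refine ((h1.const_mul (m.choose l : ℝ)).fun_mul (hasDerivAt_pow (m - l) p)).congr_deriv ?_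
    have hc : (m.choose (l + 1) : ℝ) * (l + 1 : ℕ) = m.choose l * (m - l : ℕ) := by
      exact_mod_cast Nat.choose_succ_right_eq m l
    simp only [g, Nat.add_sub_cancel, Nat.sub_add_eq, hc]
    ring
  have hsum : ∑ l ∈ Finset.range j, (g (l + 1) - g l) = g j := by
    rw [Finset.sum_range_sub]; simp [g]
  have := HasDerivAt.fun_sum (u := Finset.range j) fun l _ => hterm l
  rwa [hsum] at this

theorem monotoneOn (m j : ℕ) : MonotoneOn (binomTail m j) (Icc 0 1) := by
  refine monotoneOn_of_deriv_nonneg (convex_Icc 0 1) (continuous m j).continuousOn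
    (fun p _ => (hasDerivAt m j p).differentiableAt.differentiableWithinAt) fun p hp => ?_
  rw [interior_Icc] at hp
  rw [(hasDerivAt m j p).deriv]
  have : 0 ≤ 1 - p := by linarith [hp.2]
  have : 0 ≤ p := hp.1.le
  positivity

theorem eval_one (m : ℕ) {j : ℕ} (hj : 1 ≤ j) : binomTail m j 1 = 1 := by
  rw [binomTail, Finset.sum_eq_single_of_mem 0 (Finset.mem_range.mpr hj)]
  · simp
  · intro l _ hl
    simp [zero_pow hl]

theorem eval_zero {m j : ℕ} (hjm : j ≤ m) : binomTail m j 0 = 0 := by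
  refine Finset.sum_eq_zero fun l hl => ?_
  have : m - l ≠ 0 := by have := Finset.mem_range.mp hl; omega
  simp [zero_pow this]

theorem le_one (m : ℕ) {j : ℕ} (hj : 1 ≤ j) {p : ℝ} (hp : p ∈ Icc (0 : ℝ) 1) :
    binomTail m j p ≤ 1 :=
  eval_one m hj ▸ monotoneOn m j hp (right_mem_Icc.mpr zero_le_one) hp.2

theorem integral_choose_mul_pow {m l : ℕ} (hl : l ≤ m) :
    ∫ p in (0 : ℝ)..1, (m.choose l : ℝ) * (1 - p) ^ l * p ^ (m - l) = 1 / (m + 1) := by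
  have hc : ((m + 1).choose (l + 1) : ℝ) * (l + 1 : ℕ) = (m + 1) * m.choose l := by
    exact_mod_cast (Nat.add_one_mul_choose_eq m l).symm
  have hderiv (p : ℝ) : HasDerivAt (binomTail (m + 1) (l + 1))
      ((m + 1) * ((m.choose l : ℝ) * (1 - p) ^ l * p ^ (m - l))) p := by
    convert hasDerivAt (m + 1) (l + 1) p using 1
    rw [← mul_assoc, ← mul_assoc, ← hc, Nat.add_sub_cancel, Nat.add_sub_add_right]
  have h := intervalIntegral.integral_eq_sub_of_hasDerivAt (a := 0) (b := 1)
    (fun p _ => hderiv p) (by apply Continuous.intervalIntegrable; fun_prop)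
  rw [intervalIntegral.integral_const_mul, eval_one _ (by omega), eval_zero (by omega)] at h
  field_simp
  linarith

theorem integral {m j : ℕ} (hjm : j ≤ m) :
    ∫ p in (0 : ℝ)..1, binomTail m j p = j / (m + 1) := by
  unfold binomTail
  rw [intervalIntegral.integral_finsetSum fun l _ => by
    apply Continuous.intervalIntegrable; fun_prop]
  rw [Finset.sum_congr rfl fun l hl => integral_choose_mul_pow
    ((Finset.mem_range.mp hl).le.trans hjm)]
  simp [div_eq_mul_inv]

end binomTail

noncomputable def binomTailMix {ι : Type*} [Fintype ι] (w : ι → ℝ) (m : ι → ℕ) (k : ℕ)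
    (p : ℝ) : ℝ :=
  ∑ h, w h * binomTail (m h) k p

namespace binomTailMix

variable {ι : Type*} [Fintype ι]

theorem continuous (w : ι → ℝ) (m : ι → ℕ) (k : ℕ) : Continuous (binomTailMix w m k) :=
  continuous_finsetSum _ fun _ _ => continuous_const.mul (binomTail.continuous _ _)

theorem monotoneOn {w : ι → ℝ} (m : ι → ℕ) (k : ℕ) (hw : ∀ h, 0 ≤ w h) :
    MonotoneOn (binomTailMix w m k) (Icc 0 1) :=
  fun _ hp _ hp' hpp' => Finset.sum_le_sum fun h _ =>
    mul_le_mul_of_nonneg_left (binomTail.monotoneOn _ _ hp hp' hpp') (hw h)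

theorem le_one {w : ι → ℝ} (m : ι → ℕ) (hw : ∀ h, 0 ≤ w h) (hw1 : ∑ h, w h = 1) {k : ℕ}
    (hk : 1 ≤ k) {p : ℝ} (hp : p ∈ Icc (0 : ℝ) 1) : binomTailMix w m k p ≤ 1 :=
  calc binomTailMix w m k p ≤ ∑ h, w h * 1 :=
        Finset.sum_le_sum fun h _ => mul_le_mul_of_nonneg_left (binomTail.le_one _ hk hp) (hw h)
    _ = 1 := by simp [hw1]

theorem integral (w : ι → ℝ) {m : ι → ℕ} {k : ℕ} (hkm : ∀ h, k ≤ m h) :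
    ∫ p in (0 : ℝ)..1, binomTailMix w m k p = ∑ h, w h * (k / (m h + 1)) := by
  unfold binomTailMix
  rw [intervalIntegral.integral_finsetSum (f := fun h p => w h * binomTail (m h) k p) fun h _ =>
    (continuous_const.mul (binomTail.continuous _ _)).intervalIntegrable _ _]
  simp only [intervalIntegral.integral_const_mul, binomTail.integral (hkm _)]

theorem integral_edge_weights (Λ : ι → ℝ) {n : ι → ℕ} {k : ℕ} (hkn : ∀ h, k < n h) (s : ℝ) :
    ∫ p in (0 : ℝ)..1, binomTailMix (fun h => Λ h * n h / s) (fun h => n h - 1) k p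
      = (∑ h, Λ h) * k / s := by
  rw [integral _ fun h => Nat.le_sub_one_of_lt (hkn h), Finset.sum_mul, Finset.sum_div]
  refine Finset.sum_congr rfl fun h _ => ?_
  have hn_pos : 0 < n h := (Nat.zero_le k).trans_lt (hkn h)
  have : (n h : ℝ) ≠ 0 := by positivity
  rw [Nat.cast_sub hn_pos, Nat.cast_one, sub_add_cancel]
  field_simp

end binomTailMix

theorem integral_neg_log_one_sub (P : ℝ) :
    ∫ p in (0 : ℝ)..P, -log (1 - p) = (1 - P) * log (1 - P) + P := by
  rw [intervalIntegral.integral_neg, intervalIntegral.integral_comp_sub_left (fun x => log x),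
    integral_log]
  simp only [sub_zero, log_one]
  ring

theorem monotone_one_sub_exp_neg_mul {a : ℝ} (ha : 0 ≤ a) :
    Monotone fun x => 1 - exp (-a * x) := fun x y hxy => by
  simp only [neg_mul]
  gcongr

theorem one_sub_exp_neg_mul_mem_Icc {a x : ℝ} (ha : 0 ≤ a) (hx : 0 ≤ x) :
    1 - exp (-a * x) ∈ Icc (0 : ℝ) 1 :=
  ⟨by linarith [exp_le_one_iff.mpr (by nlinarith : -a * x ≤ 0)], by linarith [exp_pos (-a * x)]⟩

theorem lt_neg_log_one_sub_div {f : ℝ → ℝ} {a : ℝ} (ha : 0 < a)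
    (hf : ∀ x ∈ Ioc (0 : ℝ) 1, f (1 - exp (-a * x)) < x) {p : ℝ}
    (hp : p ∈ Ioc 0 (1 - exp (-a))) : f p < -log (1 - p) / a := by
  have h1p : 0 < 1 - p := by linarith [hp.2, exp_pos (-a)]
  have hlog_neg : log (1 - p) < 0 := log_neg h1p (by linarith [hp.1])
  have hlog_ge : -a ≤ log (1 - p) := by
    rw [le_log_iff_exp_le h1p]; linarith [hp.2]
  have hx : -log (1 - p) / a ∈ Ioc (0 : ℝ) 1 :=
    ⟨div_pos (neg_pos.mpr hlog_neg) ha, (div_le_one ha).mpr (by linarith)⟩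
  have hinv : 1 - exp (-a * (-log (1 - p) / a)) = p := by
    rw [show -a * (-log (1 - p) / a) = log (1 - p) by field_simp, exp_log h1p]
    ring
  simpa only [hinv] using hf _ hx

/-- `(1 - exp (-a)) / a` is the area of `[0, 1]` below the inverse of `x ↦ 1 - exp (-a x)`
capped at `1`. -/
theorem integral_lt_one_sub_exp_div {f : ℝ → ℝ} {a : ℝ} (ha : 0 < a) (hfc : Continuous f)
    (hf_le : ∀ p ∈ Icc (0 : ℝ) 1, f p ≤ 1)
    (hf : ∀ x ∈ Ioc (0 : ℝ) 1, f (1 - exp (-a * x)) < x) :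
    ∫ p in (0 : ℝ)..1, f p < (1 - exp (-a)) / a := by
  set P := 1 - exp (-a)
  have hP0 : 0 < P := by linarith [exp_lt_one_iff.mpr (neg_lt_zero.mpr ha)]
  have hP1 : P < 1 := by linarith [exp_pos (-a)]
  have hlow : ∫ p in (0 : ℝ)..P, f p < ∫ p in (0 : ℝ)..P, -log (1 - p) / a := by
    refine intervalIntegral.integral_lt_integral_of_continuousOn_of_le_of_exists_lt hP0
      hfc.continuousOn ?_ (fun p hp => (lt_neg_log_one_sub_div ha hf hp).le)
      ⟨P, right_mem_Icc.mpr hP0.le, lt_neg_log_one_sub_div ha hf ⟨hP0, le_rfl⟩⟩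
    refine ContinuousOn.div_const (ContinuousOn.neg (ContinuousOn.log (by fun_prop) ?_)) a
    intro p hp
    linarith [hp.2]
  have hhigh : ∫ p in P..1, f p ≤ 1 - P := by
    simpa using intervalIntegral.integral_mono_on hP1.le (hfc.intervalIntegrable _ _)
      (intervalIntegrable_const (μ := MeasureTheory.volume))
      fun p hp => hf_le p ⟨hP0.le.trans hp.1, hp.2⟩
  have hlog : ∫ p in (0 : ℝ)..P, -log (1 - p) / a = P / a - (1 - P) := by
    rw [intervalIntegral.integral_div, integral_neg_log_one_sub,
      show 1 - P = exp (-a) by ring, log_exp]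
    field_simp
    ring
  rw [← intervalIntegral.integral_add_adjacent_intervals (hfc.intervalIntegrable 0 P)
    (hfc.intervalIntegrable P 1)]
  linarith

theorem lt_self_of_tendsto_zero {F : ℝ → ℝ} {q : ℕ → ℝ} (hF : MonotoneOn F (Ioi 0))
    (hq : ∀ i, q (i + 1) = F (q i)) (hlim : Tendsto q atTop (nhds 0)) {x : ℝ} (hx : 0 < x)
    (hxq : x ≤ q 0) : F x < x := by
  by_contra! hFx
  have hbound (i : ℕ) : x ≤ q i := by
    induction i with
    | zero => exact hxq
    | succ i ih => rw [hq]; exact hFx.trans (hF hx (hx.trans_le ih) ih)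
  linarith [ge_of_tendsto' hlim hbound]

/-- `x ↦ 1 - exp (-x / R) - x` is concave, vanishes at `0` and `Gbar` and is positive at `G`. -/
theorem lt_of_lt_one_sub_exp_s12 {R G Gbar : ℝ} (hR : 0 < R) (hG : 0 < G) (hGbar : 0 < Gbar)
    (hlt : G < 1 - exp (-G / R)) (heq : Gbar = 1 - exp (-Gbar / R)) : G < Gbar := by
  by_contra! hle
  set t := Gbar / G
  have ht0 : 0 < t := div_pos hGbar hG
  have ht1 : t ≤ 1 := (div_le_one hG).mpr hle
  have hconv := convexOn_exp.2 (mem_univ (-G / R)) (mem_univ 0) ht0.le (sub_nonneg.mpr ht1)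
    (add_sub_cancel t 1)
  have harg : t • (-G / R) + (1 - t) • (0 : ℝ) = -Gbar / R := by
    simp only [t, smul_eq_mul, mul_zero, add_zero]
    field_simp
  rw [harg, smul_eq_mul, smul_eq_mul, exp_zero] at hconv
  have htG : t * G = Gbar := div_mul_cancel₀ Gbar hG.ne'
  nlinarith [mul_lt_mul_of_pos_left hlt ht0]

theorem stmt_12_general (k : ℕ) (hk : 1 ≤ k) (c : ℕ)
    (n : Fin c → ℕ) (hn : ∀ h, k + 1 ≤ n h)
    (Λ : Fin c → ℝ) (hΛ : ∀ h, 0 ≤ Λ h) (hsum : ∑ h, Λ h = 1)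
    (nbar R : ℝ) (hnbar : nbar = ∑ h, Λ h * (n h : ℝ)) (hR : R = (k : ℝ) / nbar)
    (G : ℝ) (hG : 0 < G)
    (fs : ℝ → ℝ) (hfs : ∀ x, fs x = 1 - Real.exp (-(G / R) * x))
    (fb : Fin c → ℝ → ℝ)
    (hfb : ∀ h p, fb h p = ∑ l ∈ Finset.range k,
      (Nat.choose (n h - 1) l : ℝ) * (1 - p) ^ l * p ^ (n h - 1 - l))
    (F : ℝ → ℝ) (hF : ∀ x, F x = ∑ h, (Λ h * (n h : ℝ) / nbar) * fb h (fs x))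
    (q : ℕ → ℝ) (hq0 : q 0 = 1) (hq : ∀ i, q (i + 1) = F (q i))
    (hconv : Tendsto q atTop (nhds 0)) :
    ∀ Gbar ∈ Set.Ioo (0 : ℝ) 1, Gbar = 1 - Real.exp (-Gbar / R) → G < Gbar := by
  intro Gbar hGbar heq
  have hnbar_pos : 0 < nbar :=
    calc (0 : ℝ) < ∑ h, Λ h * 1 := by simp [hsum]
      _ ≤ nbar := hnbar ▸ Finset.sum_le_sum fun h _ =>
          mul_le_mul_of_nonneg_left (by exact_mod_cast (Nat.le_add_left 1 k).trans (hn h)) (hΛ h)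
  have hR0 : 0 < R := hR ▸ div_pos (by exact_mod_cast hk) hnbar_pos
  have hGR : 0 < G / R := div_pos hG hR0
  set w : Fin c → ℝ := fun h => Λ h * n h / nbar
  have hw : ∀ h, 0 ≤ w h := fun h =>
    div_nonneg (mul_nonneg (hΛ h) (Nat.cast_nonneg _)) hnbar_pos.le
  have hw1 : ∑ h, w h = 1 := by rw [← Finset.sum_div, ← hnbar, div_self hnbar_pos.ne']
  set Fbar := binomTailMix w (fun h => n h - 1) k
  have hfs_eq : fs = fun x => 1 - exp (-(G / R) * x) := funext hfs
  have hF_eq : F = Fbar ∘ fs := funext fun x => by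
    simp only [hF, hfb, Function.comp, Fbar, binomTailMix, binomTail, w]
  have hF_mono : MonotoneOn F (Ioi 0) := hF_eq ▸ hfs_eq ▸
    (binomTailMix.monotoneOn _ _ hw).comp ((monotone_one_sub_exp_neg_mul hGR.le).monotoneOn _)
      fun x hx => one_sub_exp_neg_mul_mem_Icc hGR.le (le_of_lt hx)
  have hFbar_lt : ∀ x ∈ Ioc (0 : ℝ) 1, Fbar (1 - exp (-(G / R) * x)) < x := fun x hx => by
    simpa only [hF_eq, Function.comp, hfs] using
      lt_self_of_tendsto_zero hF_mono hq hconv hx.1 (hq0 ▸ hx.2)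
  have hGP : G < 1 - exp (-G / R) := by
    have := integral_lt_one_sub_exp_div hGR (binomTailMix.continuous _ _ _)
      (fun p hp => binomTailMix.le_one _ hw hw1 hk hp) hFbar_lt
    rwa [binomTailMix.integral_edge_weights _ hn, hsum, one_mul, ← hR, lt_div_iff₀ hGR,
      mul_div_cancel₀ _ hR0.ne', ← neg_div] at this
  exact lt_of_lt_one_sub_exp_s12 hR0 hG hGbar.1 hGP heq

/-- Capacity bound for MDS-based coded slotted ALOHA: if the SIC recursion
`q₀ = 1`, `q_{i+1} = Σ_h λ_h f_b^{(h)} (f_s (q_i))`, with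
`f_s(x) = 1 - exp(-(G/R) x)` and
`f_b^{(h)}(p) = Σ_{l<k} C(n_h-1,l) (1-p)^l p^(n_h-1-l)`, converges to `0`,
then `G < Ḡ(R)`, where `Ḡ(R)` is the unique solution in `(0,1)` of
`G = 1 - exp (-G/R)`. -/
theorem stmt_12 (k : ℕ) (hk : 1 ≤ k) (c : ℕ) (hc : 1 ≤ c)
    (n : Fin c → ℕ) (hn : ∀ h, k + 1 ≤ n h)
    (Λ : Fin c → ℝ) (hΛ : ∀ h, 0 ≤ Λ h) (hsum : ∑ h, Λ h = 1)
    (nbar R : ℝ) (hnbar : nbar = ∑ h, Λ h * (n h : ℝ)) (hR : R = (k : ℝ) / nbar)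
    (G : ℝ) (hG : 0 < G)
    (fs : ℝ → ℝ) (hfs : ∀ x, fs x = 1 - Real.exp (-(G / R) * x))
    (fb : Fin c → ℝ → ℝ)
    (hfb : ∀ h p, fb h p = ∑ l ∈ Finset.range k,
      (Nat.choose (n h - 1) l : ℝ) * (1 - p) ^ l * p ^ (n h - 1 - l))
    (F : ℝ → ℝ) (hF : ∀ x, F x = ∑ h, (Λ h * (n h : ℝ) / nbar) * fb h (fs x))
    (q : ℕ → ℝ) (hq0 : q 0 = 1) (hq : ∀ i, q (i + 1) = F (q i))
    (hconv : Tendsto q atTop (nhds 0)) :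
    ∀ Gbar ∈ Set.Ioo (0 : ℝ) 1, Gbar = 1 - Real.exp (-Gbar / R) → G < Gbar :=
  stmt_12_general k hk c n hn Λ hΛ hsum nbar R hnbar hR G hG fs hfs fb hfb F hF q hq0 hq hconv
end

section
/- Let c ≥ 1 be an integer, let n_1, …, n_c be integers with n_h ≥ 2, and let Λ_1, …, Λ_c be nonnegative reals with Σ_h Λ_h = 1. Set n̄ = Σ_h Λ_h n_h, λ_h = Λ_h n_h / n̄, and R = 1/n̄. For G > 0 define F_G(q) = Σ_h λ_h (1 - exp(-(G/R) q))^{n_h - 1} and the sequence q₀(G) = 1, q_{i+1}(G) = F_G(q_i(G)). Define the capacity G* = sup { G > 0 : q_i(G) → 0 as i → ∞ } (with G* = 0 if the set is empty). Then G* ≤ Ḡ(R), where Ḡ(R) is the unique solution in (0,1) of G = 1 - exp(-G/R). -/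
/-!
Write `s = G/R = G·n̄` and `F = F_G`. If the recursion converges to `0` from `1`, then
`F q ≤ q` on `(0, 1]`, since `F` is monotone and a point with `q < F q` would trap the iterates
above `q`. This forces the potential
`Φ(x) = Σ_h (Λ_h/n̄)(1 - e^{-sx})^{n_h} + x e^{-sx} + e^{-sx}/s`, whose derivative is
`s e^{-sx} (F x - x)`, to decrease on `[0, 1]`. Together with Bernoulli's inequality,
`Φ(1) ≤ Φ(0)` gives the area bound `G + e^{-G n̄} ≤ 1`. The function `G ↦ 1 - e^{-G n̄} - G` is
strictly concave and vanishes at `0` and at `Ḡ(R)`, so it is negative beyond `Ḡ(R)`.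
-/

open Filter Topology Real Set

theorem le_of_tendsto_iterate {α : Type*} [TopologicalSpace α] [Preorder α] [ClosedIciTopology α]
    {f : α → α} {q x L : α} (hf : MonotoneOn f (Ici q)) (hq : q ≤ f q) (hx : q ≤ x)
    (h : Tendsto (fun i => f^[i] x) atTop (𝓝 L)) : q ≤ L := by
  refine ge_of_tendsto h (Eventually.of_forall fun i => ?_)
  induction i with
  | zero => exact hx
  | succ i ih =>
    rw [Function.iterate_succ_apply']
    exact hq.trans (hf le_rfl ih ih)

theorem le_of_add_exp_neg_le_one {k G Gbar : ℝ} (hGbar : 0 < Gbar)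
    (hfix : Gbar = 1 - exp (-k * Gbar)) (hG : 0 < G) (hle : G + exp (-k * G) ≤ 1) :
    G ≤ Gbar := by
  by_contra! hlt
  have hk : k ≠ 0 := by
    rintro rfl
    simp only [neg_zero, zero_mul, exp_zero, sub_self] at hfix
    exact hGbar.ne' hfix
  set t := Gbar / G
  have ht0 : 0 < t := div_pos hGbar hG
  have ht1 : t < 1 := (div_lt_one hG).2 hlt
  have htG : t * G = Gbar := div_mul_cancel₀ Gbar hG.ne'
  have hconv := strictConvexOn_exp.2 (mem_univ (-k * G)) (mem_univ 0)
    (by simp [hk, hG.ne']) ht0 (by linarith : 0 < 1 - t) (by ring)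
  simp only [smul_eq_mul, mul_zero, add_zero, exp_zero, mul_one] at hconv
  rw [show t * (-k * G) = -k * Gbar by rw [← htG]; ring] at hconv
  -- `1 - Ḡ = exp (-k Ḡ) < t exp (-k G) + (1 - t) ≤ t (1 - G) + (1 - t) = 1 - Ḡ`
  have hle' : t * exp (-k * G) ≤ t * (1 - G) := by gcongr; linarith
  linarith

theorem sum_sub_sum_mul_le_sum_mul_one_sub_pow {ι : Type*} [Fintype ι] {a : ι → ℝ} (n : ι → ℕ)
    (ha : ∀ h, 0 ≤ a h) {y : ℝ} (hy : y ≤ 2) :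
    ∑ h, a h - (∑ h, a h * n h) * y ≤ ∑ h, a h * (1 - y) ^ n h := by
  rw [Finset.sum_mul, ← Finset.sum_sub_distrib]
  refine Finset.sum_le_sum fun h _ => ?_
  calc a h - a h * n h * y = a h * (1 + n h * -y) := by ring
    _ ≤ a h * (1 + -y) ^ n h := by gcongr; exacts [ha h, one_add_mul_le_pow (by linarith) _]
    _ = a h * (1 - y) ^ n h := by rw [← sub_eq_add_neg]

namespace CodedSlottedAloha

variable {ι : Type*} [Fintype ι] (a : ι → ℝ) (n : ι → ℕ) (s : ℝ)

/-- The SIC update `F` in terms of the node-perspective weights `a h = Λ h / n̄`. -/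
noncomputable def sicMap (x : ℝ) : ℝ :=
  ∑ h, a h * n h * (1 - exp (-s * x)) ^ (n h - 1)

noncomputable def sicPotential (x : ℝ) : ℝ :=
  ∑ h, a h * (1 - exp (-s * x)) ^ n h + x * exp (-s * x) + exp (-s * x) / s

variable {a n s}

theorem sicMap_monotoneOn (ha : ∀ h, 0 ≤ a h) (hs : 0 ≤ s) : MonotoneOn (sicMap a n s) (Ici 0) := by
  intro x hx y _ hxy
  have hexp_le_one : exp (-s * x) ≤ 1 := exp_le_one_iff.2 (by nlinarith [mem_Ici.1 hx])
  have hexp_anti : exp (-s * y) ≤ exp (-s * x) := exp_le_exp.2 (by nlinarith)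
  refine Finset.sum_le_sum fun h _ => ?_
  gcongr
  have := ha h; positivity

theorem sicMap_le_self_of_tendsto (ha : ∀ h, 0 ≤ a h) (hs : 0 ≤ s) {q : ℝ} (hq : q ∈ Ioc 0 1)
    (h : Tendsto (fun i => (sicMap a n s)^[i] 1) atTop (𝓝 0)) : sicMap a n s q ≤ q := by
  by_contra! hlt
  have hmono := (sicMap_monotoneOn (n := n) ha hs).mono (Ici_subset_Ici.2 hq.1.le)
  exact hq.1.not_ge (le_of_tendsto_iterate hmono hlt.le hq.2 h)

theorem hasDerivAt_sicPotential (hs : s ≠ 0) (x : ℝ) :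
    HasDerivAt (sicPotential a n s) (s * exp (-s * x) * (sicMap a n s x - x)) x := by
  have hE : HasDerivAt (fun y => exp (-s * y)) (exp (-s * x) * -s) x := by
    simpa using ((hasDerivAt_id x).const_mul (-s)).exp
  have hB : HasDerivAt (fun y => 1 - exp (-s * y)) (-(exp (-s * x) * -s)) x :=
    (hasDerivAt_const x 1).sub hE |>.congr_deriv (by ring)
  have hsum := HasDerivAt.fun_sum fun h (_ : h ∈ Finset.univ) => (hB.pow (n h)).const_mul (a h)
  refine ((hsum.add ((hasDerivAt_id x).mul hE)).add (hE.div_const s)).congr_deriv ?_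
  simp only [sicMap, id]
  field_simp
  rw [mul_sub, Finset.mul_sum]
  ring_nf
  exact congrArg _ (Finset.sum_congr rfl fun _ _ => by ring)

theorem sicPotential_one_le_zero (hs : 0 < s) (hF : ∀ x ∈ Ioo 0 1, sicMap a n s x ≤ x) :
    sicPotential a n s 1 ≤ sicPotential a n s 0 := by
  have hderiv := hasDerivAt_sicPotential (a := a) (n := n) hs.ne'
  have hanti : AntitoneOn (sicPotential a n s) (Icc 0 1) := by
    refine antitoneOn_of_hasDerivWithinAt_nonpos (convex_Icc 0 1)
      (fun x _ => (hderiv x).continuousAt.continuousWithinAt)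
      (fun x _ => (hderiv x).hasDerivWithinAt) fun x hx => ?_
    rw [interior_Icc] at hx
    exact mul_nonpos_of_nonneg_of_nonpos (by positivity) (sub_nonpos.2 (hF x hx))
  exact hanti (left_mem_Icc.2 zero_le_one) (right_mem_Icc.2 zero_le_one) zero_le_one

theorem sicPotential_zero (hn : ∀ h, n h ≠ 0) : sicPotential a n s 0 = 1 / s := by
  simp [sicPotential, hn]

theorem mul_sum_add_exp_neg_le_one (ha : ∀ h, 0 ≤ a h) (hn : ∀ h, n h ≠ 0)
    (han : ∑ h, a h * n h = 1) (hs : 0 < s)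
    (h : Tendsto (fun i => (sicMap a n s)^[i] 1) atTop (𝓝 0)) :
    s * ∑ h, a h + exp (-s) ≤ 1 := by
  have hΦ := sicPotential_one_le_zero hs fun x hx =>
    sicMap_le_self_of_tendsto ha hs.le ⟨hx.1, hx.2.le⟩ h
  have hbernoulli := sum_sub_sum_mul_le_sum_mul_one_sub_pow n ha
    (y := exp (-s)) ((exp_le_one_iff.2 (by linarith)).trans one_le_two)
  rw [sicPotential_zero hn] at hΦ
  simp only [sicPotential, mul_one, one_mul] at hΦ
  rw [han, one_mul] at hbernoulli
  calc s * ∑ h, a h + exp (-s) = s * (∑ h, a h + exp (-s) / s) := by field_simp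
    _ ≤ s * (1 / s) := by gcongr; linarith
    _ = 1 := mul_one_div_cancel hs.ne'

end CodedSlottedAloha

open CodedSlottedAloha in
theorem stmt_13_general (c : ℕ) (n : Fin c → ℕ) (hn : ∀ h, 2 ≤ n h)
    (Λ : Fin c → ℝ) (hΛ : ∀ h, 0 ≤ Λ h) (hsum : ∑ h, Λ h = 1)
    (nbar R : ℝ) (hnbar : nbar = ∑ h, Λ h * (n h : ℝ)) (hR : R = 1 / nbar) :
    ∀ Gbar ∈ Set.Ioo (0 : ℝ) 1, Gbar = 1 - Real.exp (-Gbar / R) →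
      sSup {G : ℝ | 0 < G ∧
        Tendsto
          (fun i : ℕ =>
            (fun x : ℝ => ∑ h, (Λ h * (n h : ℝ) / nbar) *
              (1 - Real.exp (-(G / R) * x)) ^ (n h - 1))^[i] 1)
          atTop (nhds 0)} ≤ Gbar := by
  intro Gbar hGbar hfix
  have hn_ne_zero (h : Fin c) : n h ≠ 0 := by have := hn h; omega
  have hnbar_pos : 0 < nbar := by
    rw [hnbar]
    calc (0 : ℝ) < ∑ h, Λ h := hsum ▸ one_pos
      _ ≤ ∑ h, Λ h * n h := Finset.sum_le_sum fun h _ =>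
        le_mul_of_one_le_right (hΛ h) (Nat.one_le_cast.2 (Nat.one_le_iff_ne_zero.2 (hn_ne_zero h)))
  have hdiv_R (x : ℝ) : x / R = nbar * x := by rw [hR, div_div_eq_mul_div, div_one, mul_comm]
  rw [neg_div, hdiv_R, ← neg_mul] at hfix
  refine Real.sSup_le (fun G ⟨hG, htend⟩ => ?_) hGbar.1.le
  have hmap : sicMap (fun h => Λ h / nbar) n (G / R) = fun x => ∑ h, Λ h * n h / nbar *
      (1 - exp (-(G / R) * x)) ^ (n h - 1) := by
    funext x
    simp only [sicMap, div_mul_eq_mul_div]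
  have harea := mul_sum_add_exp_neg_le_one (fun h => div_nonneg (hΛ h) hnbar_pos.le) hn_ne_zero
    (by simp only [div_mul_eq_mul_div, ← Finset.sum_div, ← hnbar, div_self hnbar_pos.ne'])
    (by rw [hdiv_R]; positivity) (hmap ▸ htend)
  rw [hdiv_R, ← Finset.sum_div, hsum, mul_one_div, mul_div_cancel_left₀ _ hnbar_pos.ne', ← neg_mul]
    at harea
  exact le_of_add_exp_neg_le_one hGbar.1 hfix hG harea

/-- The capacity `G* = sup {G > 0 : the SIC recursion started at 1 converges
to 0}` of the repetition-based (`k = 1`) coded slotted ALOHA scheme is upper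
bounded by `Ḡ(R)`, the unique solution in `(0,1)` of `G = 1 - exp (-G/R)`
(with `sSup ∅ = 0` by convention in `ℝ`). -/
theorem stmt_13 (c : ℕ) (hc : 1 ≤ c) (n : Fin c → ℕ) (hn : ∀ h, 2 ≤ n h)
    (Λ : Fin c → ℝ) (hΛ : ∀ h, 0 ≤ Λ h) (hsum : ∑ h, Λ h = 1)
    (nbar R : ℝ) (hnbar : nbar = ∑ h, Λ h * (n h : ℝ)) (hR : R = 1 / nbar) :
    ∀ Gbar ∈ Set.Ioo (0 : ℝ) 1, Gbar = 1 - Real.exp (-Gbar / R) →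
      sSup {G : ℝ | 0 < G ∧
        Tendsto
          (fun i : ℕ =>
            (fun x : ℝ => ∑ h, (Λ h * (n h : ℝ) / nbar) *
              (1 - Real.exp (-(G / R) * x)) ^ (n h - 1))^[i] 1)
          atTop (nhds 0)} ≤ Gbar :=
  stmt_13_general c n hn Λ hΛ hsum nbar R hnbar hR
end
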